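/- Let Ω ⊆ ℝ^n and let f : Ω → ℝ be convex. If Ω contains a point in the relative interior of the convex hull of Ω, then the convex roof f̂ is finite at every point of the convex hull (it never equals -∞), giving a real-valued convex extension of f to the convex hull of Ω. -/

import Mathlib

open scoped BigOperators

/-- Jensen-type convexity of `f` on an arbitrary subset `s`. -/
def JConvexOn {E : Type*} [AddCommGroup E] [Module ℝ E] (s : Set E) (f : E → ℝ) : Prop :=
  ∀ (k : ℕ) (x : Fin k → E) (w : Fin k → ℝ),
    (∀ i, x i ∈ s) → (∀ i, 0 ≤ w i) → (∑ i, w i) = 1 →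
    (∑ i, w i • x i) ∈ s →
    f (∑ i, w i • x i) ≤ ∑ i, w i * f (x i)

/-- The set of values `∑ λᵢ f(xᵢ)` over all representations of `x` as a convex
combination `x = ∑ λᵢ xᵢ` of points `xᵢ ∈ Ω`. -/
def roofSet {E : Type*} [AddCommGroup E] [Module ℝ E] (Ω : Set E) (f : E → ℝ) (x : E) :
    Set ℝ :=
  { r | ∃ (k : ℕ) (p : Fin k → E) (w : Fin k → ℝ),
      (∀ i, p i ∈ Ω) ∧ (∀ i, 0 ≤ w i) ∧ (∑ i, w i) = 1 ∧
      (∑ i, w i • p i) = x ∧ r = ∑ i, w i * f (p i) }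

/-- The convex roof of `f`. -/
noncomputable def convexRoof {E : Type*} [AddCommGroup E] [Module ℝ E]
    (Ω : Set E) (f : E → ℝ) (x : E) : ℝ :=
  sInf (roofSet Ω f x)

open Set Filter Topology AffineMap
open scoped Pointwise

/-!
The values `∑ λᵢ f(xᵢ)` attached to representations of points as convex combinations are
stable under convex combination, so the roof is convex wherever it is finite, and by Jensen it
agrees with `f` on `Ω`. Finiteness comes from the relative-interior point `p ∈ Ω`: every `x` in
the hull lies on a segment `[x, y]` of the hull having `p` in its interior, so
`p = a x + b y` with `a > 0`, and for every representation value `r` of `x` and one fixed value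
`r'` of `y`, Jensen at `p` gives `f p ≤ a r + b r'`, a lower bound on `r`.
-/

section roofSet

variable {E : Type*} [AddCommGroup E] [Module ℝ E] {Ω : Set E} {f : E → ℝ}

lemma mem_roofSet_self (f : E → ℝ) {x : E} (hx : x ∈ Ω) : f x ∈ roofSet Ω f x :=
  ⟨1, fun _ => x, fun _ => 1, fun _ => hx, fun _ => zero_le_one, by simp, by simp, by simp⟩

lemma JConvexOn.le_of_mem_roofSet (hf : JConvexOn Ω f) {x : E} (hx : x ∈ Ω) {r : ℝ}
    (hr : r ∈ roofSet Ω f x) : f x ≤ r := by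
  obtain ⟨k, p, w, hp, hw, hw1, rfl, rfl⟩ := hr
  exact hf k p w hp hw hw1 hx

lemma JConvexOn.isLeast_roofSet (hf : JConvexOn Ω f) {x : E} (hx : x ∈ Ω) :
    IsLeast (roofSet Ω f x) (f x) :=
  ⟨mem_roofSet_self f hx, fun _ => hf.le_of_mem_roofSet hx⟩

lemma smul_roofSet_add_smul_roofSet_subset {x y : E} {a b : ℝ} (ha : 0 ≤ a) (hb : 0 ≤ b)
    (hab : a + b = 1) :
    a • roofSet Ω f x + b • roofSet Ω f y ⊆ roofSet Ω f (a • x + b • y) := by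
  rintro _ ⟨_, ⟨_, ⟨k, p, w, hp, hw, hw1, rfl, rfl⟩, rfl⟩, _,
    ⟨_, ⟨l, q, v, hq, hv, hv1, rfl, rfl⟩, rfl⟩, rfl⟩
  refine ⟨k + l, Fin.append p q, Fin.append (a • w) (b • v), ?_, ?_, ?_, ?_, ?_⟩
  · exact Fin.addCases (by simpa using hp) (by simpa using hq)
  · exact Fin.addCases (by simpa using fun i => mul_nonneg ha (hw i))
      (by simpa using fun i => mul_nonneg hb (hv i))
  · simp [Fin.sum_univ_add, ← Finset.mul_sum, hw1, hv1, hab]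
  · simp [Fin.sum_univ_add, mul_smul, Finset.smul_sum]
  · simp [Fin.sum_univ_add, mul_assoc, Finset.mul_sum]

lemma roofSet_nonempty_of_mem_convexHull (f : E → ℝ) {x : E} (hx : x ∈ convexHull ℝ Ω) :
    (roofSet Ω f x).Nonempty := by
  refine convexHull_min (t := {z | (roofSet Ω f z).Nonempty})
    (fun z hz => ⟨f z, mem_roofSet_self f hz⟩) ?_ hx
  rintro u ⟨ru, hru⟩ v ⟨rv, hrv⟩ a b ha hb hab
  exact ⟨_, smul_roofSet_add_smul_roofSet_subset ha hb hab
    (add_mem_add (smul_mem_smul_set hru) (smul_mem_smul_set hrv))⟩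

lemma JConvexOn.bddBelow_roofSet_of_mem_openSegment (hf : JConvexOn Ω f) {p x y : E}
    (hp : p ∈ Ω) (hpxy : p ∈ openSegment ℝ x y) (hy : (roofSet Ω f y).Nonempty) :
    BddBelow (roofSet Ω f x) := by
  obtain ⟨a, b, ha, hb, hab, rfl⟩ := hpxy
  obtain ⟨r', hr'⟩ := hy
  refine ⟨(f (a • x + b • y) - b * r') / a, fun r hr => ?_⟩
  have hcomb := smul_roofSet_add_smul_roofSet_subset ha.le hb.le hab
    (add_mem_add (smul_mem_smul_set hr) (smul_mem_smul_set hr'))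
  have hjensen : f (a • x + b • y) ≤ a * r + b * r' := hf.le_of_mem_roofSet hp hcomb
  rw [div_le_iff₀ ha]
  linarith

end roofSet

lemma convexOn_sInf_of_smul_add_smul_subset {E : Type*} [AddCommGroup E] [Module ℝ E]
    {C : Set E} (hC : Convex ℝ C) (S : E → Set ℝ) (hne : ∀ x ∈ C, (S x).Nonempty)
    (hbdd : ∀ x ∈ C, BddBelow (S x))
    (hS : ∀ x ∈ C, ∀ y ∈ C, ∀ a b : ℝ, 0 ≤ a → 0 ≤ b → a + b = 1 →
      a • S x + b • S y ⊆ S (a • x + b • y)) :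
    ConvexOn ℝ C (fun x => sInf (S x)) := by
  refine ⟨hC, fun x hx y hy a b ha hb hab => ?_⟩
  calc sInf (S (a • x + b • y))
      ≤ sInf (a • S x + b • S y) :=
        csInf_le_csInf (hbdd _ (hC hx hy ha hb hab))
          ((hne x hx).smul_set.add (hne y hy).smul_set) (hS x hx y hy a b ha hb hab)
    _ = a • sInf (S x) + b • sInf (S y) := by
        rw [csInf_add (hne x hx).smul_set ((hbdd x hx).smul_of_nonneg ha)
          (hne y hy).smul_set ((hbdd y hy).smul_of_nonneg hb),
          Real.sInf_smul_of_nonneg ha, Real.sInf_smul_of_nonneg hb]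

lemma exists_mem_openSegment_of_mem_intrinsicInterior {E : Type*} [AddCommGroup E]
    [Module ℝ E] [TopologicalSpace E] [IsTopologicalAddGroup E] [ContinuousSMul ℝ E]
    {s : Set E} {p x : E} (hp : p ∈ intrinsicInterior ℝ s) (hx : x ∈ s) :
    ∃ y ∈ s, p ∈ openSegment ℝ x y := by
  obtain ⟨q, hq, rfl⟩ := hp
  let c : ℝ → affineSpan ℝ s := fun t =>
    ⟨lineMap x q t, AffineMap.lineMap_mem t (subset_affineSpan ℝ s hx) q.2⟩
  have hc : Continuous c := lineMap_continuous.subtype_mk _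
  have hc1 : c 1 = q := Subtype.ext (lineMap_apply_one x q)
  have hnhds : ∀ᶠ t in 𝓝 (1 : ℝ), c t ∈ interior ((↑) ⁻¹' s) :=
    (isOpen_interior.preimage hc).mem_nhds (by simpa [hc1] using hq)
  obtain ⟨τ, hτ, hτ1⟩ :=
    ((hnhds.filter_mono nhdsWithin_le_nhds).and (self_mem_nhdsWithin (s := Ioi 1))).exists
  have hτ0 : 0 < τ := zero_lt_one.trans hτ1
  refine ⟨lineMap x q τ, (interior_subset hτ : c τ ∈ _), ?_⟩
  rw [openSegment_eq_image_lineMap]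
  refine ⟨τ⁻¹, ⟨inv_pos.2 hτ0, inv_lt_one_of_one_lt₀ hτ1⟩, ?_⟩
  rw [lineMap_lineMap_right, inv_mul_cancel₀ hτ0.ne', lineMap_apply_one]

/-- If a convex function's domain `Ω` contains a point of the relative interior of the
convex hull of `Ω`, then the convex roof is finite (bounded below) at every point of the
convex hull, and gives a real-valued convex extension of `f` to the convex hull. -/
theorem convexRoof_finite_of_relint_point {n : ℕ}
    (Ω : Set (EuclideanSpace ℝ (Fin n))) (f : EuclideanSpace ℝ (Fin n) → ℝ)
    (hf : JConvexOn Ω f)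
    (hpt : ∃ p, p ∈ Ω ∧ p ∈ intrinsicInterior ℝ (convexHull ℝ Ω)) :
    (∀ x ∈ convexHull ℝ Ω, (roofSet Ω f x).Nonempty ∧ BddBelow (roofSet Ω f x)) ∧
    ConvexOn ℝ (convexHull ℝ Ω) (convexRoof Ω f) ∧
    ∀ x ∈ Ω, convexRoof Ω f x = f x := by
  obtain ⟨p, hpΩ, hp⟩ := hpt
  have hfinite : ∀ x ∈ convexHull ℝ Ω,
      (roofSet Ω f x).Nonempty ∧ BddBelow (roofSet Ω f x) := by
    intro x hx
    obtain ⟨y, hy, hpxy⟩ := exists_mem_openSegment_of_mem_intrinsicInterior hp hx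
    exact ⟨roofSet_nonempty_of_mem_convexHull f hx,
      hf.bddBelow_roofSet_of_mem_openSegment hpΩ hpxy (roofSet_nonempty_of_mem_convexHull f hy)⟩
  refine ⟨hfinite, ?_, fun x hx => (hf.isLeast_roofSet hx).csInf_eq⟩
  exact convexOn_sInf_of_smul_add_smul_subset (convex_convexHull ℝ Ω) (roofSet Ω f)
    (fun x hx => (hfinite x hx).1) (fun x hx => (hfinite x hx).2)
    (fun _ _ _ _ _ _ ha hb hab => smul_roofSet_add_smul_roofSet_subset ha hb hab)
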